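/- Let Π be a box subgrid of δℤ^d, let r' ≥ 0 and write ρ_{r'}(x) = 1 + |x|^{r'}. Then for every function φ : Π → ℝ^m and every x ∈ ℝ^d: ‖Pφ(x)‖ ≤ Pρ_{r'}(x) · sup_{z∈Π} (‖φ(z)‖/ρ_{r'}(z)), where Pρ_{r'} is the interpolation of the restriction of ρ_{r'} to Π. -/

import Mathlib

noncomputable section

/-- The grid point `δ·k` of `δℤ^d`, viewed in `ℝ^d`. -/
def gridPt (d : ℕ) (δ : ℝ) (k : Fin d → ℤ) : EuclideanSpace ℝ (Fin d) :=
  WithLp.toLp 2 (fun i => δ * k i)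

/-- The metric projection of `x ∈ ℝ^d` onto the closed convex box
`Box = ∏_i [δ m_i, δ M_i]` (for the Euclidean norm it is the coordinatewise clamp). -/
def boxProj (d : ℕ) (δ : ℝ) (mlo Mhi : Fin d → ℤ) (x : EuclideanSpace ℝ (Fin d)) :
    EuclideanSpace ℝ (Fin d) :=
  WithLp.toLp 2 (fun i => max (δ * mlo i) (min (x i) (δ * Mhi i)))

/-- The hat basis function `ψ_z(x) = ∏_i max(0, 1 − |x_i − z_i|/δ)`. -/
def hatFn (d : ℕ) (δ : ℝ) (z x : EuclideanSpace ℝ (Fin d)) : ℝ :=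
  ∏ i, max 0 (1 - |x i - z i| / δ)

/-- The multilinear interpolation operator
`Pφ(x) = Σ_{z∈Π} ψ_z(Proj(x, Box)) φ(z)` on the box subgrid `Π = {δk : m ≤ k ≤ M}`. -/
def interp {E : Type*} [AddCommGroup E] [Module ℝ E]
    (d : ℕ) (δ : ℝ) (mlo Mhi : Fin d → ℤ)
    (φ : EuclideanSpace ℝ (Fin d) → E) (x : EuclideanSpace ℝ (Fin d)) : E :=
  ∑ k ∈ Finset.Icc mlo Mhi,
    hatFn d δ (gridPt d δ k) (boxProj d δ mlo Mhi x) • φ (gridPt d δ k)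

open Finset

theorem le_mul_sup'_div {ι : Type*} {s : Finset ι} (hs : s.Nonempty) (g ρ : ι → ℝ) {k : ι}
    (hk : k ∈ s) (hρ : 0 < ρ k) :
    g k ≤ ρ k * s.sup' hs (fun j => g j / ρ j) := by
  rw [← div_le_iff₀' hρ]
  exact le_sup' (fun j => g j / ρ j) hk

theorem norm_sum_smul_le_sum_mul_sup'_div {ι E : Type*} [SeminormedAddCommGroup E]
    [NormedSpace ℝ E] {s : Finset ι} (hs : s.Nonempty) (w ρ : ι → ℝ) (f : ι → E)
    (hw : ∀ k ∈ s, 0 ≤ w k) (hρ : ∀ k ∈ s, 0 < ρ k) :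
    ‖∑ k ∈ s, w k • f k‖ ≤ (∑ k ∈ s, w k * ρ k) * s.sup' hs (fun k => ‖f k‖ / ρ k) := by
  rw [sum_mul]
  refine (norm_sum_le _ _).trans (sum_le_sum fun k hk => ?_)
  rw [norm_smul, Real.norm_of_nonneg (hw k hk), mul_assoc]
  exact mul_le_mul_of_nonneg_left (le_mul_sup'_div hs (fun j => ‖f j‖) ρ hk (hρ k hk))
    (hw k hk)

theorem hatFn_nonneg (d : ℕ) (δ : ℝ) (z x : EuclideanSpace ℝ (Fin d)) :
    0 ≤ hatFn d δ z x :=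
  prod_nonneg fun _ _ => le_max_left _ _

theorem interp_real (d : ℕ) (δ : ℝ) (mlo Mhi : Fin d → ℤ)
    (g : EuclideanSpace ℝ (Fin d) → ℝ) (x : EuclideanSpace ℝ (Fin d)) :
    interp d δ mlo Mhi g x = ∑ k ∈ Icc mlo Mhi,
      hatFn d δ (gridPt d δ k) (boxProj d δ mlo Mhi x) * g (gridPt d δ k) :=
  rfl

theorem interp_growth_bound_general
    (d m : ℕ) (δ : ℝ)
    (mlo Mhi : Fin d → ℤ) (hne : (Finset.Icc mlo Mhi).Nonempty)
    (r' : ℝ)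
    (φ : EuclideanSpace ℝ (Fin d) → EuclideanSpace ℝ (Fin m))
    (x : EuclideanSpace ℝ (Fin d)) :
    ‖interp d δ mlo Mhi φ x‖ ≤
      interp d δ mlo Mhi (fun y => 1 + ‖y‖ ^ r') x *
        (Finset.Icc mlo Mhi).sup' hne
          (fun k => ‖φ (gridPt d δ k)‖ / (1 + ‖gridPt d δ k‖ ^ r')) := by
  rw [interp_real]
  exact norm_sum_smul_le_sum_mul_sup'_div hne _ _ _
    (fun _ _ => hatFn_nonneg d δ _ _)
    (fun _ _ => add_pos_of_pos_of_nonneg one_pos (Real.rpow_nonneg (norm_nonneg _) r'))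

/-- With `ρ_{r'}(x) = 1 + |x|^{r'}`, for every `φ : Π → ℝ^m` and every `x ∈ ℝ^d`,
`‖Pφ(x)‖ ≤ Pρ_{r'}(x) · sup_{z∈Π} ‖φ(z)‖/ρ_{r'}(z)`. -/
theorem interp_growth_bound
    (d m : ℕ) (hd : 1 ≤ d) (δ : ℝ) (hδ : 0 < δ)
    (mlo Mhi : Fin d → ℤ) (hne : (Finset.Icc mlo Mhi).Nonempty)
    (r' : ℝ) (hr' : 0 ≤ r')
    (φ : EuclideanSpace ℝ (Fin d) → EuclideanSpace ℝ (Fin m))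
    (x : EuclideanSpace ℝ (Fin d)) :
    ‖interp d δ mlo Mhi φ x‖ ≤
      interp d δ mlo Mhi (fun y => 1 + ‖y‖ ^ r') x *
        (Finset.Icc mlo Mhi).sup' hne
          (fun k => ‖φ (gridPt d δ k)‖ / (1 + ‖gridPt d δ k‖ ^ r')) :=
  interp_growth_bound_general d m δ mlo Mhi hne r' φ x
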